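/- The set U = ∪_{i=1}^6 (A_i \ {ψ_i(0,0)}) ∪ {|S⟩} in ℂ^3 ⊗ ℂ^3 ⊗ ℂ^3 is an unextendible product basis: no nonzero product state u⊗v⊗w is orthogonal to every element of U. -/
import Mathlib


noncomputable section



noncomputable section

def ket (i : Fin 3) : Fin 3 → ℂ := fun j => if j = i then 1 else 0
def η (s : Fin 2) : Fin 3 → ℂ := ket 0 + ((-1 : ℂ) ^ (s : ℕ)) • ket 1
def ξ (s : Fin 2) : Fin 3 → ℂ := ket 1 + ((-1 : ℂ) ^ (s : ℕ)) • ket 2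

/-- Component of the tile OPB families A₁,…,A₆ of ℂ³⊗ℂ³⊗ℂ³ on party A. -/
def fA : Fin 6 → Fin 2 → Fin 2 → (Fin 3 → ℂ)
  | 0, i, _ => ξ i | 1, i, _ => ξ i | 2, _, _ => ket 2
  | 3, i, _ => η i | 4, i, _ => η i | 5, _, _ => ket 0

/-- Component on party B. -/
def fB : Fin 6 → Fin 2 → Fin 2 → (Fin 3 → ℂ)
  | 0, _, _ => ket 0 | 1, _, j => η j | 2, i, _ => ξ i
  | 3, _, _ => ket 2 | 4, _, j => ξ j | 5, i, _ => η i

/-- Component on party C. -/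
def fC : Fin 6 → Fin 2 → Fin 2 → (Fin 3 → ℂ)
  | 0, _, j => η j | 1, _, _ => ket 2 | 2, _, j => η j
  | 3, _, j => ξ j | 4, _, _ => ket 0 | 5, _, j => ξ j

/-- The element ψ_f(i,j) of family A_{f+1} in ℂ³⊗ℂ³⊗ℂ³. -/
def tri (f : Fin 6) (i j : Fin 2) : Fin 3 × Fin 3 × Fin 3 → ℂ :=
  fun x => fA f i j x.1 * fB f i j x.2.1 * fC f i j x.2.2

/-- The stopper state (|0⟩+|1⟩+|2⟩)^{⊗3}. -/
def stopper : Fin 3 × Fin 3 × Fin 3 → ℂ := fun _ => 1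

/-- The UPB U = ∪ᵢ(Aᵢ \ {ψᵢ(0,0)}) ∪ {|S⟩} of Eq. (14). -/
def Uset : Set (Fin 3 × Fin 3 × Fin 3 → ℂ) :=
  {x | ∃ f i j, ¬(i = 0 ∧ j = 0) ∧ x = tri f i j} ∪ {stopper}

-- assume aux lemmas (paste)

lemma upb_mul3 {A B C : ℂ} (h : A*B*C = 0) : A = 0 ∨ B = 0 ∨ C = 0 := by
  rcases mul_eq_zero.mp h with h | h
  · rcases mul_eq_zero.mp h with h | h
    · exact Or.inl h
    · exact Or.inr (Or.inl h)
  · exact Or.inr (Or.inr h)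

lemma upb_canc2l {k B : ℂ} (hk : k ≠ 0) (h : k * B = 0) : B = 0 := by
  rcases mul_eq_zero.mp h with h | h
  · exact absurd h hk
  · exact h

lemma upb_canc2r {A k : ℂ} (hk : k ≠ 0) (h : A * k = 0) : A = 0 := by
  rcases mul_eq_zero.mp h with h | h
  · exact h
  · exact absurd h hk

lemma upb_cancel_mid {A k B : ℂ} (hk : k ≠ 0) (h : A * k * B = 0) : A * B = 0 := by
  rcases upb_mul3 h with h | h | h
  · rw [h]; ring
  · exact absurd h hk
  · rw [h]; ring

lemma upb_cancel_left {k A B : ℂ} (hk : k ≠ 0) (h : k * A * B = 0) : A * B = 0 := by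
  rcases upb_mul3 h with h | h | h
  · exact absurd h hk
  · rw [h]; ring
  · rw [h]; ring

lemma upb_cancel_right {A B k : ℂ} (hk : k ≠ 0) (h : A * B * k = 0) : A * B = 0 := by
  rcases upb_mul3 h with h | h | h
  · rw [h]; ring
  · rw [h]; ring
  · exact absurd h hk

lemma upb_pm {A B : ℂ} (h1 : A + B = 0) (h2 : A - B = 0) : A = 0 ∧ B = 0 :=
  ⟨by linear_combination (h1 + h2)/2, by linear_combination (h1 - h2)/2⟩

lemma upb_fam {A0 A1 B0 B1 : ℂ} (h1 : A0*B1 = 0) (h2 : A1*B0 = 0) (h3 : A1*B1 = 0) :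
    (A0 = 0 ∧ A1 = 0) ∨ (B0 = 0 ∧ B1 = 0) ∨ (A1 = 0 ∧ B1 = 0) := by
  rcases mul_eq_zero.mp h1 with hA0 | hB1
  · rcases mul_eq_zero.mp h2 with hA1 | hB0
    · exact Or.inl ⟨hA0, hA1⟩
    · rcases mul_eq_zero.mp h3 with hA1 | hB1
      · exact Or.inl ⟨hA0, hA1⟩
      · exact Or.inr (Or.inl ⟨hB0, hB1⟩)
  · rcases mul_eq_zero.mp h2 with hA1 | hB0
    · exact Or.inr (Or.inr ⟨hA1, hB1⟩)
    · exact Or.inr (Or.inl ⟨hB0, hB1⟩)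

lemma upb_nzA {a : ℂ} (h : a ≠ 0 ∨ (0:ℂ) ≠ 0 ∨ (0:ℂ) ≠ 0) : a ≠ 0 := by
  rcases h with h | h | h
  · exact h
  · exact absurd rfl h
  · exact absurd rfl h

lemma upb_nzB {b : ℂ} (h : (0:ℂ) ≠ 0 ∨ b ≠ 0 ∨ (0:ℂ) ≠ 0) : b ≠ 0 := by
  rcases h with h | h | h
  · exact absurd rfl h
  · exact h
  · exact absurd rfl h

lemma upb_nzC {c : ℂ} (h : (0:ℂ) ≠ 0 ∨ (0:ℂ) ≠ 0 ∨ c ≠ 0) : c ≠ 0 := by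
  rcases h with h | h | h
  · exact absurd rfl h
  · exact absurd rfl h
  · exact h

lemma upb_fin3 {P : Fin 3 → Prop} (i : Fin 3) (h : P i) : P 0 ∨ P 1 ∨ P 2 := by
  fin_cases i
  · exact Or.inl h
  · exact Or.inr (Or.inl h)
  · exact Or.inr (Or.inr h)

/-- The case v = (0,q,0): contradiction. Equations already have the q-factor cancelled. -/
lemma upb_vmid (a b c x y z : ℂ)
    (hu : a ≠ 0 ∨ b ≠ 0 ∨ c ≠ 0) (hw : x ≠ 0 ∨ y ≠ 0 ∨ z ≠ 0)
    (E2a : (b + c) * z = 0) (E2b : (b - c) * z = 0)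
    (E3a : c * (x - y) = 0) (E3b : c * (x + y) = 0)
    (E5a : (a + b) * x = 0) (E5b : (a - b) * x = 0)
    (E6a : a * (y - z) = 0) (E6b : a * (y + z) = 0)
    (ES : (a + b + c) * (x + y + z) = 0) : False := by
  have hz0 : z = 0 := by
    by_contra hz
    obtain ⟨hb0, hc0⟩ := upb_pm (upb_canc2r hz E2a) (upb_canc2r hz E2b)
    have ha : a ≠ 0 := by
      rcases hu with h | h | h
      · exact h
      · exact absurd hb0 h
      · exact absurd hc0 h
    exact hz (upb_pm (upb_canc2l ha E6b) (upb_canc2l ha E6a)).2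
  subst hz0
  have hx0 : x = 0 := by
    by_contra hx
    obtain ⟨ha0, hb0⟩ := upb_pm (upb_canc2r hx E5a) (upb_canc2r hx E5b)
    have hc : c ≠ 0 := by
      rcases hu with h | h | h
      · exact absurd ha0 h
      · exact absurd hb0 h
      · exact h
    exact hx (upb_pm (upb_canc2l hc E3b) (upb_canc2l hc E3a)).1
  subst hx0
  have hy : y ≠ 0 := upb_nzB hw
  have hc0 : c = 0 :=
    upb_canc2r (show (0:ℂ) - y ≠ 0 from fun hh => hy (by linear_combination -hh)) E3a
  have ha0 : a = 0 :=
    upb_canc2r (show y - 0 ≠ 0 from fun hh => hy (by linear_combination hh)) E6a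
  subst hc0; subst ha0
  have hb : b ≠ 0 := upb_nzB hu
  rcases mul_eq_zero.mp ES with h | h
  · exact hb (by linear_combination h)
  · exact hy (by linear_combination h)

/-- The case w = (0,y,0): contradiction. Equations already have the y-factor cancelled. -/
lemma upb_wmid (a b c p q r : ℂ)
    (hu : a ≠ 0 ∨ b ≠ 0 ∨ c ≠ 0) (hv : p ≠ 0 ∨ q ≠ 0 ∨ r ≠ 0)
    (E1a : (b + c) * p = 0) (E1b : (b - c) * p = 0)
    (E3a : c * (q + r) = 0) (E3b : c * (q - r) = 0)
    (E4a : (a + b) * r = 0) (E4b : (a - b) * r = 0)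
    (E6a : a * (p + q) = 0) (E6b : a * (p - q) = 0)
    (ES : (a + b + c) * (p + q + r) = 0) : False := by
  have hp0 : p = 0 := by
    by_contra hp
    obtain ⟨hb0, hc0⟩ := upb_pm (upb_canc2r hp E1a) (upb_canc2r hp E1b)
    have ha : a ≠ 0 := by
      rcases hu with h | h | h
      · exact h
      · exact absurd hb0 h
      · exact absurd hc0 h
    exact hp (upb_pm (upb_canc2l ha E6a) (upb_canc2l ha E6b)).1
  subst hp0
  have hr0 : r = 0 := by
    by_contra hr
    obtain ⟨ha0, hb0⟩ := upb_pm (upb_canc2r hr E4a) (upb_canc2r hr E4b)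
    have hc : c ≠ 0 := by
      rcases hu with h | h | h
      · exact absurd ha0 h
      · exact absurd hb0 h
      · exact h
    exact hr (upb_pm (upb_canc2l hc E3a) (upb_canc2l hc E3b)).2
  subst hr0
  have hq : q ≠ 0 := upb_nzB hv
  have hc0 : c = 0 :=
    upb_canc2r (show q + 0 ≠ 0 from fun hh => hq (by linear_combination hh)) E3a
  have ha0 : a = 0 :=
    upb_canc2r (show (0:ℂ) + q ≠ 0 from fun hh => hq (by linear_combination hh)) E6a
  subst hc0; subst ha0
  have hb : b ≠ 0 := upb_nzB hu
  rcases mul_eq_zero.mp ES with h | h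
  · exact hb (by linear_combination h)
  · exact hq (by linear_combination h)

lemma upb_key (a b c p q r x y z : ℂ)
    (hu : a ≠ 0 ∨ b ≠ 0 ∨ c ≠ 0) (hv : p ≠ 0 ∨ q ≠ 0 ∨ r ≠ 0) (hw : x ≠ 0 ∨ y ≠ 0 ∨ z ≠ 0)
    (e101 : (b + c) * p * (x - y) = 0)
    (e110 : (b - c) * p * (x + y) = 0)
    (e111 : (b - c) * p * (x - y) = 0)
    (e201 : (b + c) * (p - q) * z = 0)
    (e210 : (b - c) * (p + q) * z = 0)
    (e211 : (b - c) * (p - q) * z = 0)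
    (e301 : c * (q + r) * (x - y) = 0)
    (e310 : c * (q - r) * (x + y) = 0)
    (e311 : c * (q - r) * (x - y) = 0)
    (e401 : (a + b) * r * (y - z) = 0)
    (e410 : (a - b) * r * (y + z) = 0)
    (e411 : (a - b) * r * (y - z) = 0)
    (e501 : (a + b) * (q - r) * x = 0)
    (e510 : (a - b) * (q + r) * x = 0)
    (e511 : (a - b) * (q - r) * x = 0)
    (e601 : a * (p + q) * (y - z) = 0)
    (e610 : a * (p - q) * (y + z) = 0)
    (e611 : a * (p - q) * (y - z) = 0)
    (eS : (a + b + c) * (p + q + r) * (x + y + z) = 0) : False := by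
  -- w is not the middle vector
  have hxz : x ≠ 0 ∨ z ≠ 0 := by
    by_contra h
    push_neg at h
    obtain ⟨hx0, hz0⟩ := h
    subst hx0; subst hz0
    have hy : y ≠ 0 := upb_nzB hw
    have hy1 : (0:ℂ) - y ≠ 0 := fun hh => hy (by linear_combination -hh)
    have hy2 : (0:ℂ) + y ≠ 0 := fun hh => hy (by linear_combination hh)
    have hy3 : y - 0 ≠ 0 := fun hh => hy (by linear_combination hh)
    have hy4 : y + 0 ≠ 0 := fun hh => hy (by linear_combination hh)
    have hy5 : (0:ℂ) + y + 0 ≠ 0 := fun hh => hy (by linear_combination hh)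
    exact upb_wmid a b c p q r hu hv
      (upb_cancel_right hy1 e101) (upb_cancel_right hy2 e110)
      (upb_cancel_right hy1 e301) (upb_cancel_right hy2 e310)
      (upb_cancel_right hy3 e401) (upb_cancel_right hy4 e410)
      (upb_cancel_right hy3 e601) (upb_cancel_right hy4 e610)
      (upb_cancel_right hy5 eS)
  -- v is not the middle vector
  have hpr : p ≠ 0 ∨ r ≠ 0 := by
    by_contra h
    push_neg at h
    obtain ⟨hp0, hr0⟩ := h
    subst hp0; subst hr0
    have hq : q ≠ 0 := upb_nzB hv
    have hq1 : (0:ℂ) - q ≠ 0 := fun hh => hq (by linear_combination -hh)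
    have hq2 : (0:ℂ) + q ≠ 0 := fun hh => hq (by linear_combination hh)
    have hq3 : q - 0 ≠ 0 := fun hh => hq (by linear_combination hh)
    have hq4 : q + 0 ≠ 0 := fun hh => hq (by linear_combination hh)
    have hq5 : (0:ℂ) + q + 0 ≠ 0 := fun hh => hq (by linear_combination hh)
    exact upb_vmid a b c x y z hu hw
      (upb_cancel_mid hq1 e201) (upb_cancel_mid hq2 e210)
      (upb_cancel_mid hq4 e301) (upb_cancel_mid hq3 e310)
      (upb_cancel_mid hq3 e501) (upb_cancel_mid hq4 e510)
      (upb_cancel_mid hq2 e601) (upb_cancel_mid hq1 e610)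
      (upb_cancel_mid hq5 eS)
  -- the six family dichotomies
  have F1 : p ≠ 0 → ((b+c=0 ∧ b-c=0) ∨ (x+y=0 ∧ x-y=0) ∨ (b-c=0 ∧ x-y=0)) :=
    fun hp => upb_fam (upb_cancel_mid hp e101) (upb_cancel_mid hp e110) (upb_cancel_mid hp e111)
  have F2 : z ≠ 0 → ((b+c=0 ∧ b-c=0) ∨ (p+q=0 ∧ p-q=0) ∨ (b-c=0 ∧ p-q=0)) :=
    fun hz => upb_fam (upb_cancel_right hz e201) (upb_cancel_right hz e210) (upb_cancel_right hz e211)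
  have F3 : c ≠ 0 → ((q+r=0 ∧ q-r=0) ∨ (x+y=0 ∧ x-y=0) ∨ (q-r=0 ∧ x-y=0)) :=
    fun hc => upb_fam (upb_cancel_left hc e301) (upb_cancel_left hc e310) (upb_cancel_left hc e311)
  have F4 : r ≠ 0 → ((a+b=0 ∧ a-b=0) ∨ (y+z=0 ∧ y-z=0) ∨ (a-b=0 ∧ y-z=0)) :=
    fun hr => upb_fam (upb_cancel_mid hr e401) (upb_cancel_mid hr e410) (upb_cancel_mid hr e411)
  have F5 : x ≠ 0 → ((a+b=0 ∧ a-b=0) ∨ (q+r=0 ∧ q-r=0) ∨ (a-b=0 ∧ q-r=0)) :=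
    fun hx => upb_fam (upb_cancel_right hx e501) (upb_cancel_right hx e510) (upb_cancel_right hx e511)
  have F6 : a ≠ 0 → ((p+q=0 ∧ p-q=0) ∨ (y+z=0 ∧ y-z=0) ∨ (p-q=0 ∧ y-z=0)) :=
    fun ha => upb_fam (upb_cancel_left ha e601) (upb_cancel_left ha e610) (upb_cancel_left ha e611)
  clear e101 e110 e111 e201 e210 e211 e301 e310 e311 e401 e410 e411 e501 e510 e511 e601 e610 e611
  rcases eq_or_ne z 0 with hz0 | hz
  · -- CASE z = 0, hence x ≠ 0
    subst hz0
    have hx : x ≠ 0 := by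
      rcases hxz with h | h
      · exact h
      · exact absurd rfl h
    rcases F5 hx with ⟨h1, h2⟩ | ⟨h1, h2⟩ | ⟨h1, h2⟩
    · -- a = b = 0
      obtain ⟨ha0, hb0⟩ := upb_pm h1 h2
      subst ha0; subst hb0
      have hc : c ≠ 0 := upb_nzC hu
      rcases F3 hc with ⟨g1, g2⟩ | ⟨g1, g2⟩ | ⟨g1, g2⟩
      · -- q = r = 0
        obtain ⟨hq0, hr0⟩ := upb_pm g1 g2
        subst hq0; subst hr0
        have hp : p ≠ 0 := upb_nzA hv
        rcases F1 hp with ⟨g3, g4⟩ | ⟨g3, g4⟩ | ⟨g3, g4⟩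
        · exact hc (upb_pm g3 g4).2
        · exact hx (upb_pm g3 g4).1
        · exact hc (by linear_combination -g3)
      · exact hx (upb_pm g1 g2).1
      · -- q = r, x = y
        have hqr : q = r := sub_eq_zero.mp g1
        have hxy : x = y := sub_eq_zero.mp g2
        have hp0 : p = 0 := by
          by_contra hp
          rcases F1 hp with ⟨g3, g4⟩ | ⟨g3, g4⟩ | ⟨g3, g4⟩
          · exact hc (upb_pm g3 g4).2
          · exact hx (upb_pm g3 g4).1
          · exact hc (by linear_combination -g3)
        subst hp0
        have hq : q ≠ 0 := by
          rcases hv with h | h | h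
          · exact absurd rfl h
          · exact h
          · intro hq0; exact h (hqr.symm.trans hq0)
        rcases upb_mul3 eS with h | h | h
        · exact hc (by linear_combination h)
        · exact hq (by linear_combination h/2 + hqr/2)
        · exact hx (by linear_combination h/2 + hxy/2)
    · -- q = r = 0
      obtain ⟨hq0, hr0⟩ := upb_pm h1 h2
      subst hq0; subst hr0
      have hp : p ≠ 0 := upb_nzA hv
      rcases F1 hp with ⟨g1, g2⟩ | ⟨g1, g2⟩ | ⟨g1, g2⟩
      · -- b = c = 0
        obtain ⟨hb0, hc0⟩ := upb_pm g1 g2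
        subst hb0; subst hc0
        have ha : a ≠ 0 := upb_nzA hu
        have hy0 : y = 0 := by
          rcases F6 ha with ⟨g3, g4⟩ | ⟨g3, g4⟩ | ⟨g3, g4⟩
          · exact absurd (upb_pm g3 g4).1 hp
          · exact (upb_pm g3 g4).1
          · exact absurd (by linear_combination g3) hp
        rcases upb_mul3 eS with h | h | h
        · exact ha (by linear_combination h)
        · exact hp (by linear_combination h)
        · exact hx (by linear_combination h - hy0)
      · exact hx (upb_pm g1 g2).1
      · -- b = c, x = y
        have hbc : b = c := sub_eq_zero.mp g1
        have hxy : x = y := sub_eq_zero.mp g2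
        have ha0 : a = 0 := by
          by_contra ha
          rcases F6 ha with ⟨g3, g4⟩ | ⟨g3, g4⟩ | ⟨g3, g4⟩
          · exact hp (upb_pm g3 g4).1
          · exact hx (hxy.trans (upb_pm g3 g4).1)
          · exact hx (hxy.trans (by linear_combination g4))
        subst ha0
        have hb : b ≠ 0 := by
          rcases hu with h | h | h
          · exact absurd rfl h
          · exact h
          · intro hb0; exact h (hbc.symm.trans hb0)
        rcases upb_mul3 eS with h | h | h
        · exact hb (by linear_combination h/2 + hbc/2)
        · exact hp (by linear_combination h)
        · exact hx (by linear_combination h/2 + hxy/2)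
    · -- a = b, q = r
      have hab : a = b := sub_eq_zero.mp h1
      have hqr : q = r := sub_eq_zero.mp h2
      rcases eq_or_ne q 0 with hq0 | hq
      · -- q = 0, r = 0
        have hr0 : r = 0 := hqr.symm.trans hq0
        subst hq0; subst hr0
        have hp : p ≠ 0 := upb_nzA hv
        rcases F1 hp with ⟨g1, g2⟩ | ⟨g1, g2⟩ | ⟨g1, g2⟩
        · obtain ⟨hb0, hc0⟩ := upb_pm g1 g2
          rcases hu with h | h | h
          · exact h (hab.trans hb0)
          · exact h hb0
          · exact h hc0
        · exact hx (upb_pm g1 g2).1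
        · -- b = c, x = y
          have hbc : b = c := sub_eq_zero.mp g1
          have hxy : x = y := sub_eq_zero.mp g2
          have ha : a ≠ 0 := by
            intro ha0
            rcases hu with h | h | h
            · exact h ha0
            · exact h (hab.symm.trans ha0)
            · exact h (hbc.symm.trans (hab.symm.trans ha0))
          rcases F6 ha with ⟨g3, g4⟩ | ⟨g3, g4⟩ | ⟨g3, g4⟩
          · exact hp (upb_pm g3 g4).1
          · exact hx (hxy.trans (upb_pm g3 g4).1)
          · exact hx (hxy.trans (by linear_combination g4))
      · -- q ≠ 0, so r ≠ 0
        have hr : r ≠ 0 := fun hr0 => hq (hqr.trans hr0)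
        rcases F4 hr with ⟨g1, g2⟩ | ⟨g1, g2⟩ | ⟨g1, g2⟩
        · -- a = b = 0
          obtain ⟨ha0, hb0⟩ := upb_pm g1 g2
          subst ha0; subst hb0
          have hc : c ≠ 0 := upb_nzC hu
          rcases F3 hc with ⟨g3, g4⟩ | ⟨g3, g4⟩ | ⟨g3, g4⟩
          · exact hq (upb_pm g3 g4).1
          · exact hx (upb_pm g3 g4).1
          · -- x = y
            have hxy : x = y := sub_eq_zero.mp g4
            have hp0 : p = 0 := by
              by_contra hp
              rcases F1 hp with ⟨g5, g6⟩ | ⟨g5, g6⟩ | ⟨g5, g6⟩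
              · exact hc (upb_pm g5 g6).2
              · exact hx (upb_pm g5 g6).1
              · exact hc (by linear_combination -g5)
            subst hp0
            rcases upb_mul3 eS with h | h | h
            · exact hc (by linear_combination h)
            · exact hq (by linear_combination h/2 + hqr/2)
            · exact hx (by linear_combination h/2 + hxy/2)
        · -- y = 0
          have hy0 : y = 0 := (upb_pm g1 g2).1
          have hc0 : c = 0 := by
            by_contra hc
            rcases F3 hc with ⟨g3, g4⟩ | ⟨g3, g4⟩ | ⟨g3, g4⟩
            · exact hq (upb_pm g3 g4).1
            · exact hx (upb_pm g3 g4).1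
            · exact hx (by linear_combination g4 + hy0)
          subst hc0
          have ha : a ≠ 0 := by
            intro ha0
            rcases hu with h | h | h
            · exact h ha0
            · exact h (hab.symm.trans ha0)
            · exact h rfl
          have hp0 : p = 0 := by
            by_contra hp
            rcases F1 hp with ⟨g3, g4⟩ | ⟨g3, g4⟩ | ⟨g3, g4⟩
            · exact ha (hab.trans (upb_pm g3 g4).1)
            · exact hx (upb_pm g3 g4).1
            · exact ha (hab.trans (by linear_combination g3))
          subst hp0
          rcases upb_mul3 eS with h | h | h
          · exact ha (by linear_combination h/2 + hab/2)
          · exact hq (by linear_combination h/2 + hqr/2)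
          · exact hx (by linear_combination h - hy0)
        · -- a = b (known), y = z = 0
          have hy0 : y = 0 := by linear_combination g2
          have hc0 : c = 0 := by
            by_contra hc
            rcases F3 hc with ⟨g3, g4⟩ | ⟨g3, g4⟩ | ⟨g3, g4⟩
            · exact hq (upb_pm g3 g4).1
            · exact hx (upb_pm g3 g4).1
            · exact hx (by linear_combination g4 + hy0)
          subst hc0
          have ha : a ≠ 0 := by
            intro ha0
            rcases hu with h | h | h
            · exact h ha0
            · exact h (hab.symm.trans ha0)
            · exact h rfl
          have hp0 : p = 0 := by
            by_contra hp
            rcases F1 hp with ⟨g3, g4⟩ | ⟨g3, g4⟩ | ⟨g3, g4⟩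
            · exact ha (hab.trans (upb_pm g3 g4).1)
            · exact hx (upb_pm g3 g4).1
            · exact ha (hab.trans (by linear_combination g3))
          subst hp0
          rcases upb_mul3 eS with h | h | h
          · exact ha (by linear_combination h/2 + hab/2)
          · exact hq (by linear_combination h/2 + hqr/2)
          · exact hx (by linear_combination h - hy0)
  · -- CASE z ≠ 0
    rcases F2 hz with ⟨h1, h2⟩ | ⟨h1, h2⟩ | ⟨h1, h2⟩
    · -- b = c = 0
      obtain ⟨hb0, hc0⟩ := upb_pm h1 h2
      subst hb0; subst hc0
      have ha : a ≠ 0 := upb_nzA hu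
      have hr0 : r = 0 := by
        by_contra hr
        rcases F4 hr with ⟨g1, g2⟩ | ⟨g1, g2⟩ | ⟨g1, g2⟩
        · exact ha (upb_pm g1 g2).1
        · exact hz (upb_pm g1 g2).2
        · exact ha (by linear_combination g1)
      subst hr0
      rcases F6 ha with ⟨g1, g2⟩ | ⟨g1, g2⟩ | ⟨g1, g2⟩
      · obtain ⟨hp0, hq0⟩ := upb_pm g1 g2
        rcases hv with h | h | h
        · exact h hp0
        · exact h hq0
        · exact h rfl
      · exact hz (upb_pm g1 g2).2
      · -- p = q, y = z
        have hpq : p = q := sub_eq_zero.mp g1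
        have hyz : y = z := sub_eq_zero.mp g2
        have hp : p ≠ 0 := by
          rcases hv with h | h | h
          · exact h
          · intro hp0; exact h (hpq.symm.trans hp0)
          · exact absurd rfl h
        have hx0 : x = 0 := by
          by_contra hx
          rcases F5 hx with ⟨g3, g4⟩ | ⟨g3, g4⟩ | ⟨g3, g4⟩
          · exact ha (upb_pm g3 g4).1
          · exact hp (hpq.trans (upb_pm g3 g4).1)
          · exact ha (by linear_combination g3)
        subst hx0
        rcases upb_mul3 eS with h | h | h
        · exact ha (by linear_combination h)
        · exact hp (by linear_combination h/2 + hpq/2)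
        · exact hz (by linear_combination h/2 - hyz/2)
    · -- p = q = 0
      obtain ⟨hp0, hq0⟩ := upb_pm h1 h2
      subst hp0; subst hq0
      have hr : r ≠ 0 := upb_nzC hv
      rcases F4 hr with ⟨g1, g2⟩ | ⟨g1, g2⟩ | ⟨g1, g2⟩
      · -- a = b = 0
        obtain ⟨ha0, hb0⟩ := upb_pm g1 g2
        subst ha0; subst hb0
        have hc : c ≠ 0 := upb_nzC hu
        rcases F3 hc with ⟨g3, g4⟩ | ⟨g3, g4⟩ | ⟨g3, g4⟩
        · exact hr (upb_pm g3 g4).2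
        · obtain ⟨hx0, hy0⟩ := upb_pm g3 g4
          subst hx0; subst hy0
          rcases upb_mul3 eS with h | h | h
          · exact hc (by linear_combination h)
          · exact hr (by linear_combination h)
          · exact hz (by linear_combination h)
        · exact hr (by linear_combination -g3)
      · exact hz (upb_pm g1 g2).2
      · -- a = b, y = z
        have hab : a = b := sub_eq_zero.mp g1
        have hyz : y = z := sub_eq_zero.mp g2
        have hx0 : x = 0 := by
          by_contra hx
          rcases F5 hx with ⟨g3, g4⟩ | ⟨g3, g4⟩ | ⟨g3, g4⟩
          · -- a = b = 0, then c ≠ 0 and F3 gives contradictions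
            obtain ⟨ha0, hb0⟩ := upb_pm g3 g4
            have hc : c ≠ 0 := by
              rcases hu with h | h | h
              · exact absurd ha0 h
              · exact absurd hb0 h
              · exact h
            rcases F3 hc with ⟨g5, g6⟩ | ⟨g5, g6⟩ | ⟨g5, g6⟩
            · exact hr (upb_pm g5 g6).2
            · exact hx (upb_pm g5 g6).1
            · exact hr (by linear_combination -g5)
          · exact hr (upb_pm g3 g4).2
          · exact hr (by linear_combination -g4)
        subst hx0
        have hc0 : c = 0 := by
          by_contra hc
          rcases F3 hc with ⟨g5, g6⟩ | ⟨g5, g6⟩ | ⟨g5, g6⟩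
          · exact hr (upb_pm g5 g6).2
          · exact hz (by rw [← hyz]; exact (upb_pm g5 g6).2)
          · exact hr (by linear_combination -g5)
        subst hc0
        have ha : a ≠ 0 := by
          intro ha0
          rcases hu with h | h | h
          · exact h ha0
          · exact h (hab.symm.trans ha0)
          · exact h rfl
        rcases upb_mul3 eS with h | h | h
        · exact ha (by linear_combination h/2 + hab/2)
        · exact hr (by linear_combination h)
        · exact hz (by linear_combination h/2 - hyz/2)
    · -- b = c, p = q
      have hbc : b = c := sub_eq_zero.mp h1
      have hpq : p = q := sub_eq_zero.mp h2
      rcases eq_or_ne r 0 with hr0 | hr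
      · -- r = 0, hence p ≠ 0
        subst hr0
        have hp : p ≠ 0 := by
          rcases hpr with h | h
          · exact h
          · exact absurd rfl h
        have hx0 : x = 0 := by
          by_contra hx
          rcases F5 hx with ⟨g1, g2⟩ | ⟨g1, g2⟩ | ⟨g1, g2⟩
          · obtain ⟨ha0, hb0⟩ := upb_pm g1 g2
            rcases hu with h | h | h
            · exact h ha0
            · exact h hb0
            · exact h (hbc.symm.trans hb0)
          · exact hp (hpq.trans (upb_pm g1 g2).1)
          · exact hp (hpq.trans (by linear_combination g2))
        subst hx0
        rcases F1 hp with ⟨g1, g2⟩ | ⟨g1, g2⟩ | ⟨g1, g2⟩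
        · -- b = c = 0
          obtain ⟨hb0, hc0⟩ := upb_pm g1 g2
          subst hb0; subst hc0
          have ha : a ≠ 0 := upb_nzA hu
          rcases F6 ha with ⟨g3, g4⟩ | ⟨g3, g4⟩ | ⟨g3, g4⟩
          · exact hp (upb_pm g3 g4).1
          · exact hz (upb_pm g3 g4).2
          · have hyz : y = z := sub_eq_zero.mp g4
            rcases upb_mul3 eS with h | h | h
            · exact ha (by linear_combination h)
            · exact hp (by linear_combination h/2 + hpq/2)
            · exact hz (by linear_combination h/2 - hyz/2)
        · -- y = 0
          have hy0 : y = 0 := (upb_pm g1 g2).2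
          have ha0 : a = 0 := by
            by_contra ha
            rcases F6 ha with ⟨g3, g4⟩ | ⟨g3, g4⟩ | ⟨g3, g4⟩
            · exact hp (upb_pm g3 g4).1
            · exact hz (upb_pm g3 g4).2
            · exact hz (by linear_combination hy0 - g4)
          subst ha0
          have hb : b ≠ 0 := by
            rcases hu with h | h | h
            · exact absurd rfl h
            · exact h
            · intro hb0; exact h (hbc.symm.trans hb0)
          rcases upb_mul3 eS with h | h | h
          · exact hb (by linear_combination h/2 + hbc/2)
          · exact hp (by linear_combination h/2 + hpq/2)
          · exact hz (by linear_combination h - hy0)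
        · -- x = y with x = 0
          have hy0 : y = 0 := by linear_combination -g2
          have ha0 : a = 0 := by
            by_contra ha
            rcases F6 ha with ⟨g3, g4⟩ | ⟨g3, g4⟩ | ⟨g3, g4⟩
            · exact hp (upb_pm g3 g4).1
            · exact hz (upb_pm g3 g4).2
            · exact hz (by linear_combination hy0 - g4)
          subst ha0
          have hb : b ≠ 0 := by
            rcases hu with h | h | h
            · exact absurd rfl h
            · exact h
            · intro hb0; exact h (hbc.symm.trans hb0)
          rcases upb_mul3 eS with h | h | h
          · exact hb (by linear_combination h/2 + hbc/2)
          · exact hp (by linear_combination h/2 + hpq/2)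
          · exact hz (by linear_combination h - hy0)
      · -- r ≠ 0
        rcases F4 hr with ⟨g1, g2⟩ | ⟨g1, g2⟩ | ⟨g1, g2⟩
        · obtain ⟨ha0, hb0⟩ := upb_pm g1 g2
          rcases hu with h | h | h
          · exact h ha0
          · exact h hb0
          · exact h (hbc.symm.trans hb0)
        · exact hz (upb_pm g1 g2).2
        · -- a = b, y = z
          have hab : a = b := sub_eq_zero.mp g1
          have hyz : y = z := sub_eq_zero.mp g2
          have ha : a ≠ 0 := by
            intro ha0
            rcases hu with h | h | h
            · exact h ha0
            · exact h (hab.symm.trans ha0)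
            · exact h (hbc.symm.trans (hab.symm.trans ha0))
          have hc : c ≠ 0 := fun hc0 => ha (hab.trans (hbc.trans hc0))
          rcases F3 hc with ⟨g3, g4⟩ | ⟨g3, g4⟩ | ⟨g3, g4⟩
          · exact hr (upb_pm g3 g4).2
          · exact hz (by rw [← hyz]; exact (upb_pm g3 g4).2)
          · have hqr : q = r := sub_eq_zero.mp g3
            have hxy : x = y := sub_eq_zero.mp g4
            rcases upb_mul3 eS with h | h | h
            · exact ha (by linear_combination h/3 + 2*hab/3 + hbc/3)
            · exact hr (by linear_combination h/3 - hpq/3 - 2*hqr/3)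
            · exact hz (by linear_combination h/3 - hxy/3 - 2*hyz/3)


/-- U is an unextendible product basis: no nonzero product state u⊗v⊗w is
orthogonal to every element of U. -/
theorem stmt_10 :
    ∀ u v w : Fin 3 → ℂ,
      (∀ x ∈ Uset,
        ∑ t : Fin 3 × Fin 3 × Fin 3, (starRingEnd ℂ) (x t) * (u t.1 * v t.2.1 * w t.2.2) = 0) →
      (fun t : Fin 3 × Fin 3 × Fin 3 => u t.1 * v t.2.1 * w t.2.2) = 0 := by
  intro u v w H
  have E : ∀ (f : Fin 6) (i j : Fin 2), ¬(i = 0 ∧ j = 0) →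
      ∑ t : Fin 3 × Fin 3 × Fin 3,
        (starRingEnd ℂ) (tri f i j t) * (u t.1 * v t.2.1 * w t.2.2) = 0 :=
    fun f i j h => H _ (Or.inl ⟨f, i, j, h, rfl⟩)
  have e101 : (u 1 + u 2) * v 0 * (w 0 - w 1) = 0 := by
    have h := E 0 0 1 (by decide)
    simp [tri, fA, fB, fC, ξ, η, ket, Fintype.sum_prod_type, Fin.sum_univ_three] at h
    linear_combination h
  have e110 : (u 1 - u 2) * v 0 * (w 0 + w 1) = 0 := by
    have h := E 0 1 0 (by decide)
    simp [tri, fA, fB, fC, ξ, η, ket, Fintype.sum_prod_type, Fin.sum_univ_three] at h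
    linear_combination h
  have e111 : (u 1 - u 2) * v 0 * (w 0 - w 1) = 0 := by
    have h := E 0 1 1 (by decide)
    simp [tri, fA, fB, fC, ξ, η, ket, Fintype.sum_prod_type, Fin.sum_univ_three] at h
    linear_combination h
  have e201 : (u 1 + u 2) * (v 0 - v 1) * w 2 = 0 := by
    have h := E 1 0 1 (by decide)
    simp [tri, fA, fB, fC, ξ, η, ket, Fintype.sum_prod_type, Fin.sum_univ_three] at h
    linear_combination h
  have e210 : (u 1 - u 2) * (v 0 + v 1) * w 2 = 0 := by
    have h := E 1 1 0 (by decide)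
    simp [tri, fA, fB, fC, ξ, η, ket, Fintype.sum_prod_type, Fin.sum_univ_three] at h
    linear_combination h
  have e211 : (u 1 - u 2) * (v 0 - v 1) * w 2 = 0 := by
    have h := E 1 1 1 (by decide)
    simp [tri, fA, fB, fC, ξ, η, ket, Fintype.sum_prod_type, Fin.sum_univ_three] at h
    linear_combination h
  have e301 : u 2 * (v 1 + v 2) * (w 0 - w 1) = 0 := by
    have h := E 2 0 1 (by decide)
    simp [tri, fA, fB, fC, ξ, η, ket, Fintype.sum_prod_type, Fin.sum_univ_three] at h
    linear_combination h
  have e310 : u 2 * (v 1 - v 2) * (w 0 + w 1) = 0 := by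
    have h := E 2 1 0 (by decide)
    simp [tri, fA, fB, fC, ξ, η, ket, Fintype.sum_prod_type, Fin.sum_univ_three] at h
    linear_combination h
  have e311 : u 2 * (v 1 - v 2) * (w 0 - w 1) = 0 := by
    have h := E 2 1 1 (by decide)
    simp [tri, fA, fB, fC, ξ, η, ket, Fintype.sum_prod_type, Fin.sum_univ_three] at h
    linear_combination h
  have e401 : (u 0 + u 1) * v 2 * (w 1 - w 2) = 0 := by
    have h := E 3 0 1 (by decide)
    simp [tri, fA, fB, fC, ξ, η, ket, Fintype.sum_prod_type, Fin.sum_univ_three] at h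
    linear_combination h
  have e410 : (u 0 - u 1) * v 2 * (w 1 + w 2) = 0 := by
    have h := E 3 1 0 (by decide)
    simp [tri, fA, fB, fC, ξ, η, ket, Fintype.sum_prod_type, Fin.sum_univ_three] at h
    linear_combination h
  have e411 : (u 0 - u 1) * v 2 * (w 1 - w 2) = 0 := by
    have h := E 3 1 1 (by decide)
    simp [tri, fA, fB, fC, ξ, η, ket, Fintype.sum_prod_type, Fin.sum_univ_three] at h
    linear_combination h
  have e501 : (u 0 + u 1) * (v 1 - v 2) * w 0 = 0 := by
    have h := E 4 0 1 (by decide)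
    simp [tri, fA, fB, fC, ξ, η, ket, Fintype.sum_prod_type, Fin.sum_univ_three] at h
    linear_combination h
  have e510 : (u 0 - u 1) * (v 1 + v 2) * w 0 = 0 := by
    have h := E 4 1 0 (by decide)
    simp [tri, fA, fB, fC, ξ, η, ket, Fintype.sum_prod_type, Fin.sum_univ_three] at h
    linear_combination h
  have e511 : (u 0 - u 1) * (v 1 - v 2) * w 0 = 0 := by
    have h := E 4 1 1 (by decide)
    simp [tri, fA, fB, fC, ξ, η, ket, Fintype.sum_prod_type, Fin.sum_univ_three] at h
    linear_combination h
  have e601 : u 0 * (v 0 + v 1) * (w 1 - w 2) = 0 := by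
    have h := E 5 0 1 (by decide)
    simp [tri, fA, fB, fC, ξ, η, ket, Fintype.sum_prod_type, Fin.sum_univ_three] at h
    linear_combination h
  have e610 : u 0 * (v 0 - v 1) * (w 1 + w 2) = 0 := by
    have h := E 5 1 0 (by decide)
    simp [tri, fA, fB, fC, ξ, η, ket, Fintype.sum_prod_type, Fin.sum_univ_three] at h
    linear_combination h
  have e611 : u 0 * (v 0 - v 1) * (w 1 - w 2) = 0 := by
    have h := E 5 1 1 (by decide)
    simp [tri, fA, fB, fC, ξ, η, ket, Fintype.sum_prod_type, Fin.sum_univ_three] at h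
    linear_combination h
  have eS0 : (u 0 + u 1 + u 2) * (v 0 + v 1 + v 2) * (w 0 + w 1 + w 2) = 0 := by
    have h := H stopper (Or.inr rfl)
    simp [stopper, Fintype.sum_prod_type, Fin.sum_univ_three] at h
    linear_combination h
  by_contra hne
  obtain ⟨t, ht⟩ := Function.ne_iff.mp hne
  have ht' : u t.1 * v t.2.1 * w t.2.2 ≠ 0 := by simpa using ht
  have hu := (mul_ne_zero_iff.mp (mul_ne_zero_iff.mp ht').1).1
  have hv := (mul_ne_zero_iff.mp (mul_ne_zero_iff.mp ht').1).2
  have hw := (mul_ne_zero_iff.mp ht').2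
  exact upb_key (u 0) (u 1) (u 2) (v 0) (v 1) (v 2) (w 0) (w 1) (w 2)
    (upb_fin3 (P := fun k => u k ≠ 0) t.1 hu)
    (upb_fin3 (P := fun k => v k ≠ 0) t.2.1 hv)
    (upb_fin3 (P := fun k => w k ≠ 0) t.2.2 hw)
    e101 e110 e111 e201 e210 e211 e301 e310 e311 e401 e410 e411
    e501 e510 e511 e601 e610 e611 eS0

end
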